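/- For the correlated Markov sources (X^d, Y^d) with X_1 = Y_1 uniform, E[φ_S(X^d) φ'_T(Y^d)] = 1[S = T] · ∏_{i∈S} ρ_i, where ρ_1 = 1 and ρ_i = 4δ_x(1−δ_x)(1−2δ_y)/(σ_1 σ_2) normalized appropriately for i ≥ 2; consequently for any f, g: {-1,1}^d → ℝ, E[f(X^d) g(Y^d)] = Σ_{S⊆[d]} f_S g_S (ρ')^{|S| − 1[1∈S]} for the appropriate constant ρ'. -/

import Mathlib

/-- The real value (±1) of a Boolean symbol. -/
def sgn (b : Bool) : ℝ := if b then 1 else -1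

/-- Basis functions for a first-order Markov source with flip probability `δ`:
`ψ_0(x) = x_0` and, for `i ≥ 1`, `ψ_i(x) = (x_{i−1} x_i − (1−2δ)) / (2√(δ(1−δ)))`. -/
noncomputable def psiM (d : ℕ) (δ : ℝ) (i : Fin (d + 1)) (x : Fin (d + 1) → Bool) : ℝ :=
  if i = 0 then sgn (x 0)
  else (sgn (x (i - 1)) * sgn (x i) - (1 - 2 * δ)) / (2 * Real.sqrt (δ * (1 - δ)))

/-- Joint probability of the correlated Markov paths `(x, y)`: `X_0 = Y_0` uniform, and at
each step `X` flips with probability `δx` while `Y`'s flip equals `X`'s flip composed with an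
independent `δy`-flip, so that `P(Xflip, Yflip) = δx(1−δy)`, `P(Xflip, ¬Yflip) = δx δy`,
`P(¬Xflip, Yflip) = (1−δx)δy`, `P(¬Xflip, ¬Yflip) = (1−δx)(1−δy)`. -/
noncomputable def jointMarkov (d : ℕ) (δx δy : ℝ) (x y : Fin (d + 1) → Bool) : ℝ :=
  (if x 0 = y 0 then (1 / 2 : ℝ) else 0) *
    ∏ i : Fin d,
      ((if x i.succ ≠ x i.castSucc then δx else 1 - δx) *
        (if ((x i.succ ≠ x i.castSucc) ↔ (y i.succ ≠ y i.castSucc)) then 1 - δy else δy))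

/-!
Write a path `x` through its start `x 0` and its flips `x (i+1) ≠ x i`. Under `jointMarkov` the
two starts agree and the pairs of flips are i.i.d., while `φ_S` is a product of a factor depending
on the start and factors depending on single flips. So `E[φ_S(X) φ'_T(Y)]` is a product of one-step
moments: the one-step basis functions are centred and their covariance is `ρ'`, so a factor
vanishes unless `i ∈ S ↔ i ∈ T`.

The same product structure gives `μ(x') ∏ᵢ (1 + φᵢ(x') φᵢ(x)) = 1[x' = x]` for the marginal law
`μ` of a path; expanding the product over subsets gives `f = ∑_S f_S φ_S`, and the second claim
follows from the first by bilinearity.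
-/

open Finset

theorem Fintype.prod_sum_sum {ι α β R : Type*} [Fintype ι] [DecidableEq ι] [Fintype α]
    [Fintype β] [CommSemiring R] (W : ι → α → β → R) :
    ∏ i, ∑ p, ∑ q, W i p q = ∑ e : ι → α, ∑ f : ι → β, ∏ i, W i (e i) (f i) := by
  simp_rw [Fintype.prod_sum]

theorem Finset.prod_ite_mem_iff_mem {ι M : Type*} [Fintype ι] [DecidableEq ι]
    [CommMonoidWithZero M] (c : ι → M) (S T : Finset ι) :
    ∏ j, (if (j ∈ S ↔ j ∈ T) then (if j ∈ S then c j else 1) else 0)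
      = if S = T then ∏ j ∈ S, c j else 0 := by
  split_ifs with hST
  · subst hST
    simp
  · obtain ⟨j, hj⟩ : ∃ j, ¬(j ∈ S ↔ j ∈ T) := by
      by_contra! h
      exact hST (Finset.ext h)
    exact prod_eq_zero (mem_univ j) (if_neg hj)

theorem Finset.prod_ite_eq_one_else {α M : Type*} [DecidableEq α] [CommMonoid M]
    (S : Finset α) (a : α) (c : M) :
    ∏ i ∈ S, (if i = a then 1 else c) = c ^ (#S - if a ∈ S then 1 else 0) := by
  rw [prod_ite, prod_const_one, one_mul, prod_const, filter_ne', card_erase_eq_ite]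
  split_ifs <;> rfl

theorem sum_sum_mul_sum_mul_mul_sum_mul {α β ι κ R : Type*} [Fintype α] [Fintype β] [Fintype ι]
    [Fintype κ] [CommSemiring R] (J : α → β → R) (a : ι → R) (b : κ → R) (φ : ι → α → R)
    (ψ : κ → β → R) :
    ∑ x, ∑ y, J x y * ((∑ S, a S * φ S x) * ∑ T, b T * ψ T y)
      = ∑ S, ∑ T, a S * b T * ∑ x, ∑ y, J x y * (φ S x * ψ T y) := by
  simp_rw [sum_mul_sum, mul_sum]
  rw [sum_congr rfl fun x _ => sum_comm, sum_comm]
  refine sum_congr rfl fun S _ => ?_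
  rw [sum_congr rfl fun x _ => sum_comm, sum_comm]
  refine sum_congr rfl fun T _ => sum_congr rfl fun x _ => sum_congr rfl fun y _ => by ring

section Paths

variable {d : ℕ}

def flips (x : Fin (d + 1) → Bool) (i : Fin d) : Bool := x i.succ != x i.castSucc

def startFlips (x : Fin (d + 1) → Bool) : Bool × (Fin d → Bool) := (x 0, flips x)

theorem startFlips_injective : Function.Injective (startFlips (d := d)) := by
  intro x y h
  simp only [startFlips, Prod.mk.injEq] at h
  funext j
  induction j using Fin.induction with
  | zero => exact h.1
  | succ i ih =>
    have := congrFun h.2 i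
    simpa [flips, ih] using this

theorem startFlips_bijective : Function.Bijective (startFlips (d := d)) :=
  (Fintype.bijective_iff_injective_and_card _).2
    ⟨startFlips_injective, by simp [pow_succ']⟩

theorem sum_start_flips {M : Type*} [AddCommMonoid M] (H : Bool → (Fin d → Bool) → M) :
    ∑ x : Fin (d + 1) → Bool, H (x 0) (flips x) = ∑ a, ∑ e, H a e := by
  rw [← Fintype.sum_prod_type']
  exact startFlips_bijective.sum_comp fun p => H p.1 p.2

theorem sum_sum_mul_prod_flips {R : Type*} [CommSemiring R] (F : Bool → Bool → R)
    (G : Fin d → Bool → Bool → R) :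
    ∑ x : Fin (d + 1) → Bool, ∑ y : Fin (d + 1) → Bool,
        F (x 0) (y 0) * ∏ i, G i (flips x i) (flips y i)
      = (∑ a, ∑ b, F a b) * ∏ i, ∑ p, ∑ q, G i p q := by
  have inner (x : Fin (d + 1) → Bool) :
      ∑ y : Fin (d + 1) → Bool, F (x 0) (y 0) * ∏ i, G i (flips x i) (flips y i)
        = ∑ b, ∑ f : Fin d → Bool, F (x 0) b * ∏ i, G i (flips x i) (f i) :=
    sum_start_flips fun b f => F (x 0) b * ∏ i, G i (flips x i) (f i)
  rw [sum_congr rfl fun x _ => inner x,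
    sum_start_flips fun a e => ∑ b, ∑ f : Fin d → Bool, F a b * ∏ i, G i (e i) (f i),
    Fintype.prod_sum_sum, sum_mul]
  refine sum_congr rfl fun a _ => ?_
  rw [sum_comm, sum_mul]
  simp_rw [mul_sum]

end Paths

def flipWeight (δ : ℝ) (p : Bool) : ℝ := if p then δ else 1 - δ

/-- The flip probability `δx ⋆ δy` of `Y`. -/
def binConv (δx δy : ℝ) : ℝ := δx * (1 - δy) + δy * (1 - δx)

def jointStep (δx δy : ℝ) (p q : Bool) : ℝ := flipWeight δx p * if p = q then 1 - δy else δy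

noncomputable def psiFlip (δ : ℝ) (p : Bool) : ℝ :=
  ((if p then -1 else 1) - (1 - 2 * δ)) / (2 * √(δ * (1 - δ)))

/-- The correlation `ρ'` of the statement. -/
noncomputable def markovCorr (δx δy : ℝ) : ℝ :=
  4 * δx * (1 - δx) * (1 - 2 * δy) /
    ((2 * √(δx * (1 - δx))) * (2 * √(binConv δx δy * (1 - binConv δx δy))))

theorem binConv_pos {δx δy : ℝ} (hx0 : 0 < δx) (hx1 : δx < 1) (hy0 : 0 ≤ δy) (hy1 : δy ≤ 1) :
    0 < binConv δx δy := by
  have hA : 0 ≤ δx * (1 - δy) := mul_nonneg hx0.le (sub_nonneg.2 hy1)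
  have hB : 0 ≤ δy * (1 - δx) := mul_nonneg hy0 (sub_nonneg.2 hx1.le)
  unfold binConv
  nlinarith [mul_pos hx0 (sub_pos.2 hx1), mul_nonneg hx0.le hA,
    mul_nonneg (sub_nonneg.2 hx1.le) hB]

theorem one_sub_binConv (δx δy : ℝ) : 1 - binConv δx δy = binConv δx (1 - δy) := by
  unfold binConv; ring

theorem binConv_lt_one {δx δy : ℝ} (hx0 : 0 < δx) (hx1 : δx < 1) (hy0 : 0 ≤ δy) (hy1 : δy ≤ 1) :
    binConv δx δy < 1 := by
  have := binConv_pos hx0 hx1 (sub_nonneg.2 hy1) (by linarith : 1 - δy ≤ 1)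
  rw [← one_sub_binConv] at this
  linarith

theorem sum_flipWeight (δ : ℝ) : ∑ p, flipWeight δ p = 1 := by
  simp [flipWeight]

theorem sum_jointStep_right (δx δy : ℝ) (p : Bool) :
    ∑ q, jointStep δx δy p q = flipWeight δx p := by
  cases p <;>
    simp only [Fintype.sum_bool, jointStep, flipWeight, Bool.false_eq_true, Bool.true_eq_false,
      ↓reduceIte] <;>
    ring

theorem sum_jointStep_left (δx δy : ℝ) (q : Bool) :
    ∑ p, jointStep δx δy p q = flipWeight (binConv δx δy) q := by
  cases q <;>
    simp only [Fintype.sum_bool, jointStep, flipWeight, binConv, Bool.false_eq_true,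
      Bool.true_eq_false, ↓reduceIte] <;>
    ring

theorem sum_flipWeight_mul_psiFlip (δ : ℝ) : ∑ p, flipWeight δ p * psiFlip δ p = 0 := by
  simp only [psiFlip, ← mul_div_assoc, ← sum_div, div_eq_zero_iff]
  left
  simp only [Fintype.sum_bool, flipWeight, Bool.false_eq_true, ↓reduceIte]
  ring

theorem sum_sum_jointStep_mul_psiFlip_mul_psiFlip (δx δy : ℝ) :
    ∑ p, ∑ q, jointStep δx δy p q * (psiFlip δx p * psiFlip (binConv δx δy) q)
      = markovCorr δx δy := by
  have quotient (p q : Bool) :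
      jointStep δx δy p q * (psiFlip δx p * psiFlip (binConv δx δy) q)
        = jointStep δx δy p q * (((if p then -1 else 1) - (1 - 2 * δx)) *
            ((if q then -1 else 1) - (1 - 2 * binConv δx δy))) /
          ((2 * √(δx * (1 - δx))) * (2 * √(binConv δx δy * (1 - binConv δx δy)))) := by
    rw [psiFlip, psiFlip, div_mul_div_comm, ← mul_div_assoc]
  simp_rw [quotient, ← sum_div]
  rw [markovCorr]
  congr 1
  simp only [Fintype.sum_bool, jointStep, flipWeight, binConv, Bool.false_eq_true,
    Bool.true_eq_false, ↓reduceIte]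
  ring

theorem sum_sum_jointStep_mul_ite (δx δy : ℝ) (s t : Prop) [Decidable s] [Decidable t] :
    ∑ p, ∑ q, jointStep δx δy p q *
        ((if s then psiFlip δx p else 1) * (if t then psiFlip (binConv δx δy) q else 1))
      = if (s ↔ t) then (if s then markovCorr δx δy else 1) else 0 := by
  by_cases hs : s <;> by_cases ht : t <;>
    simp only [hs, ht, if_true, if_false, mul_one, one_mul, iff_self, iff_false, false_iff,
      not_true]
  · exact sum_sum_jointStep_mul_psiFlip_mul_psiFlip δx δy
  · simp_rw [← sum_mul, sum_jointStep_right]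
    exact sum_flipWeight_mul_psiFlip δx
  · rw [sum_comm]
    simp_rw [← sum_mul, sum_jointStep_left]
    exact sum_flipWeight_mul_psiFlip _
  · simp_rw [sum_jointStep_right]
    exact sum_flipWeight δx

theorem psiM_zero (d : ℕ) (δ : ℝ) (x : Fin (d + 1) → Bool) : psiM d δ 0 x = sgn (x 0) := by
  simp [psiM]

theorem psiM_succ (d : ℕ) (δ : ℝ) (i : Fin d) (x : Fin (d + 1) → Bool) :
    psiM d δ i.succ x = psiFlip δ (flips x i) := by
  rw [psiM, if_neg i.succ_ne_zero, ← Fin.coeSucc_eq_succ, add_sub_cancel_right,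
    Fin.coeSucc_eq_succ, psiFlip, flips]
  cases x i.succ <;> cases x i.castSucc <;> simp [sgn]

theorem prod_psiM (d : ℕ) (δ : ℝ) (S : Finset (Fin (d + 1))) (x : Fin (d + 1) → Bool) :
    ∏ i ∈ S, psiM d δ i x
      = (if 0 ∈ S then sgn (x 0) else 1) *
          ∏ i : Fin d, if i.succ ∈ S then psiFlip δ (flips x i) else 1 := by
  rw [← Fintype.prod_ite_mem, Fin.prod_univ_succ, psiM_zero]
  simp_rw [psiM_succ]

theorem jointMarkov_eq (d : ℕ) (δx δy : ℝ) (x y : Fin (d + 1) → Bool) :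
    jointMarkov d δx δy x y
      = (if x 0 = y 0 then 1 / 2 else 0) * ∏ i, jointStep δx δy (flips x i) (flips y i) := by
  refine congrArg _ (prod_congr rfl fun i _ => ?_)
  have hx : (x i.succ != x i.castSucc) = true ↔ x i.succ ≠ x i.castSucc := bne_iff_ne
  have hxy : (x i.succ != x i.castSucc) = (y i.succ != y i.castSucc)
      ↔ (x i.succ ≠ x i.castSucc ↔ y i.succ ≠ y i.castSucc) := by
    rw [Bool.eq_iff_iff, bne_iff_ne, bne_iff_ne]
  rw [jointStep, flipWeight, flips, flips, if_congr hx rfl rfl, if_congr hxy rfl rfl]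

theorem sum_sum_start_mul_ite (s t : Prop) [Decidable s] [Decidable t] :
    ∑ a, ∑ b, (if a = b then (1 / 2 : ℝ) else 0) *
        ((if s then sgn a else 1) * (if t then sgn b else 1))
      = if (s ↔ t) then 1 else 0 := by
  by_cases hs : s <;> by_cases ht : t <;> norm_num [hs, ht, sgn]

theorem sum_sum_jointMarkov_mul_prod_psiM (d : ℕ) (δx δy : ℝ) (S T : Finset (Fin (d + 1))) :
    ∑ x : Fin (d + 1) → Bool, ∑ y : Fin (d + 1) → Bool, jointMarkov d δx δy x y *
        ((∏ i ∈ S, psiM d δx i x) * ∏ i ∈ T, psiM d (binConv δx δy) i y)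
      = if S = T then ∏ i ∈ S, (if i = 0 then 1 else markovCorr δx δy) else 0 := by
  let F (a b : Bool) : ℝ :=
    (if a = b then 1 / 2 else 0) * ((if 0 ∈ S then sgn a else 1) * (if 0 ∈ T then sgn b else 1))
  let G (i : Fin d) (p q : Bool) : ℝ := jointStep δx δy p q *
    ((if i.succ ∈ S then psiFlip δx p else 1) *
      (if i.succ ∈ T then psiFlip (binConv δx δy) q else 1))
  have factorized (x y : Fin (d + 1) → Bool) :
      jointMarkov d δx δy x y *
          ((∏ i ∈ S, psiM d δx i x) * ∏ i ∈ T, psiM d (binConv δx δy) i y)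
        = F (x 0) (y 0) * ∏ i, G i (flips x i) (flips y i) := by
    rw [jointMarkov_eq, prod_psiM, prod_psiM, prod_mul_distrib, prod_mul_distrib]
    ring
  simp_rw [factorized]
  rw [sum_sum_mul_prod_flips F G]
  simp only [F, G, sum_sum_start_mul_ite, sum_sum_jointStep_mul_ite]
  rw [← prod_ite_mem_iff_mem, Fin.prod_univ_succ]
  simp [Fin.succ_ne_zero]

noncomputable def markovProb (d : ℕ) (δ : ℝ) (x : Fin (d + 1) → Bool) : ℝ :=
  1 / 2 * ∏ i : Fin d, if x i.succ = x i.castSucc then 1 - δ else δ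

noncomputable def markovCoeff (d : ℕ) (δ : ℝ) (f : (Fin (d + 1) → Bool) → ℝ)
    (S : Finset (Fin (d + 1))) : ℝ :=
  ∑ x, markovProb d δ x * (f x * ∏ i ∈ S, psiM d δ i x)

theorem markovProb_eq (d : ℕ) (δ : ℝ) (x : Fin (d + 1) → Bool) :
    markovProb d δ x = 1 / 2 * ∏ i, flipWeight δ (flips x i) := by
  refine congrArg _ (prod_congr rfl fun i _ => ?_)
  by_cases h : x i.succ = x i.castSucc <;> simp [flipWeight, flips, h]

theorem half_mul_one_add_sgn_mul_sgn (a b : Bool) :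
    1 / 2 * (1 + sgn a * sgn b) = if a = b then 1 else 0 := by
  cases a <;> cases b <;> norm_num [sgn]

theorem flipWeight_mul_one_add_psiFlip_mul {δ : ℝ} (h0 : 0 < δ) (h1 : δ < 1) (p q : Bool) :
    flipWeight δ p * (1 + psiFlip δ p * psiFlip δ q) = if p = q then 1 else 0 := by
  have hσ : (2 * √(δ * (1 - δ))) ^ 2 = 4 * (δ * (1 - δ)) := by
    rw [mul_pow, Real.sq_sqrt (mul_nonneg h0.le (sub_nonneg.2 h1.le))]
    norm_num
  have hδ : δ ≠ 0 := h0.ne'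
  have hδ' : 1 - δ ≠ 0 := (sub_pos.2 h1).ne'
  rw [psiFlip, psiFlip, div_mul_div_comm, ← sq, hσ]
  cases p <;> cases q <;>
    simp only [flipWeight, Bool.false_eq_true, Bool.true_eq_false, if_true, if_false] <;>
    field_simp <;> ring

theorem markovProb_mul_prod_one_add_psiM_mul {d : ℕ} {δ : ℝ} (h0 : 0 < δ) (h1 : δ < 1)
    (x' x : Fin (d + 1) → Bool) :
    markovProb d δ x' * ∏ j, (1 + psiM d δ j x' * psiM d δ j x) = if x' = x then 1 else 0 := by
  calc _ = 1 / 2 * (1 + sgn (x' 0) * sgn (x 0)) *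
        ∏ i, flipWeight δ (flips x' i) * (1 + psiFlip δ (flips x' i) * psiFlip δ (flips x i)) := by
        rw [markovProb_eq, Fin.prod_univ_succ, psiM_zero, psiM_zero, prod_mul_distrib]
        simp_rw [psiM_succ]
        ring
    _ = (if x' 0 = x 0 then 1 else 0) * ∏ i, if flips x' i = flips x i then 1 else 0 := by
        simp_rw [half_mul_one_add_sgn_mul_sgn, flipWeight_mul_one_add_psiFlip_mul h0 h1]
    _ = if x' = x then 1 else 0 := by
        have start_flips_eq : (x' 0 = x 0 ∧ ∀ i, flips x' i = flips x i) ↔ x' = x := by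
          rw [← startFlips_injective.eq_iff, startFlips, startFlips, Prod.mk.injEq, funext_iff]
        rw [Fintype.prod_boole, ite_zero_mul_ite_zero, one_mul]
        simp only [start_flips_eq]

theorem sum_markovCoeff_mul_prod_psiM {d : ℕ} {δ : ℝ} (h0 : 0 < δ) (h1 : δ < 1)
    (f : (Fin (d + 1) → Bool) → ℝ) (x : Fin (d + 1) → Bool) :
    ∑ S, markovCoeff d δ f S * ∏ i ∈ S, psiM d δ i x = f x := by
  calc _ = ∑ x', f x' * (markovProb d δ x' *
        ∑ S : Finset (Fin (d + 1)), ∏ i ∈ S, psiM d δ i x' * psiM d δ i x) := by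
        simp_rw [markovCoeff, sum_mul, mul_sum]
        rw [sum_comm]
        refine sum_congr rfl fun x' _ => sum_congr rfl fun S _ => ?_
        rw [prod_mul_distrib]
        ring
    _ = ∑ x', f x' * if x' = x then 1 else 0 := by
        simp_rw [← powerset_univ, ← prod_one_add, markovProb_mul_prod_one_add_psiM_mul h0 h1]
    _ = f x := by simp


/-- For the correlated Markov sources, with `δz = δx * δy` (binary convolution),
`σ₁ = 2√(δx(1−δx))`, `σ₂ = 2√(δz(1−δz))`, and `ρ' = 4δx(1−δx)(1−2δy)/(σ₁σ₂)`:
`E[φ_S(X) φ'_T(Y)] = 1[S=T] ∏_{i∈S} ρ_i` with `ρ_0 = 1` and `ρ_i = ρ'` for `i ≥ 1`;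
consequently `E[f(X) g(Y)] = ∑_S f_S g_S ρ'^{|S| − 1[0∈S]}` for the Fourier coefficients of
`f, g` in the respective bases. -/
theorem stmt_18 (d : ℕ) (δx δy : ℝ) (hx0 : 0 < δx) (hx1 : δx < 1)
    (hy0 : 0 ≤ δy) (hy1 : δy ≤ 1) :
    (∀ S T : Finset (Fin (d + 1)),
      ∑ x : Fin (d + 1) → Bool, ∑ y : Fin (d + 1) → Bool,
          jointMarkov d δx δy x y *
            ((∏ i ∈ S, psiM d δx i x) *
              (∏ i ∈ T, psiM d (δx * (1 - δy) + δy * (1 - δx)) i y))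
        = if S = T then
            ∏ i ∈ S, (if i = 0 then (1 : ℝ) else
              4 * δx * (1 - δx) * (1 - 2 * δy) /
                ((2 * Real.sqrt (δx * (1 - δx))) *
                  (2 * Real.sqrt ((δx * (1 - δy) + δy * (1 - δx)) *
                    (1 - (δx * (1 - δy) + δy * (1 - δx)))))))
          else 0) ∧
    (∀ f g : (Fin (d + 1) → Bool) → ℝ,
      ∑ x : Fin (d + 1) → Bool, ∑ y : Fin (d + 1) → Bool,
          jointMarkov d δx δy x y * (f x * g y)
        = ∑ S : Finset (Fin (d + 1)),
            (∑ x : Fin (d + 1) → Bool,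
              ((1 / 2 : ℝ) * ∏ i : Fin d, (if x i.succ = x i.castSucc then 1 - δx else δx)) *
                (f x * ∏ i ∈ S, psiM d δx i x))
            * (∑ y : Fin (d + 1) → Bool,
              ((1 / 2 : ℝ) * ∏ i : Fin d,
                (if y i.succ = y i.castSucc
                  then 1 - (δx * (1 - δy) + δy * (1 - δx))
                  else δx * (1 - δy) + δy * (1 - δx))) *
                (g y * ∏ i ∈ S, psiM d (δx * (1 - δy) + δy * (1 - δx)) i y))
            * (4 * δx * (1 - δx) * (1 - 2 * δy) /
                ((2 * Real.sqrt (δx * (1 - δx))) *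
                  (2 * Real.sqrt ((δx * (1 - δy) + δy * (1 - δx)) *
                    (1 - (δx * (1 - δy) + δy * (1 - δx)))))))
              ^ (S.card - (if (0 : Fin (d + 1)) ∈ S then 1 else 0))) := by
  have hz0 : 0 < binConv δx δy := binConv_pos hx0 hx1 hy0 hy1
  have hz1 : binConv δx δy < 1 := binConv_lt_one hx0 hx1 hy0 hy1
  refine ⟨sum_sum_jointMarkov_mul_prod_psiM d δx δy, fun f g => ?_⟩
  calc _ = ∑ x, ∑ y, jointMarkov d δx δy x y *
        ((∑ S, markovCoeff d δx f S * ∏ i ∈ S, psiM d δx i x) *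
          ∑ T, markovCoeff d (binConv δx δy) g T * ∏ i ∈ T, psiM d (binConv δx δy) i y) := by
        simp only [sum_markovCoeff_mul_prod_psiM hx0 hx1, sum_markovCoeff_mul_prod_psiM hz0 hz1]
    _ = ∑ S, ∑ T, markovCoeff d δx f S * markovCoeff d (binConv δx δy) g T *
        if S = T then ∏ i ∈ S, (if i = 0 then 1 else markovCorr δx δy) else 0 := by
        rw [sum_sum_mul_sum_mul_mul_sum_mul]
        simp only [sum_sum_jointMarkov_mul_prod_psiM]
    _ = _ := by
        simp only [mul_ite, mul_zero, sum_ite_eq, mem_univ, if_true, prod_ite_eq_one_else]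
        rfl
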